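/- arXiv:1706.08489 — 2 statements merged into one kernel-verified Lean document; each statement's English description precedes it below -/
import Mathlib

section
/- For every K > 0 and every r > 0, one has √K·( √K·r·cosh(√K·r) − sinh(√K·r) ) / ( 2 − 2·cosh(√K·r) + √K·r·sinh(√K·r) ) = (φ_K'(r)/φ_K(r)) · (Ψ_K(r)/Ψ_K(r/2)). -/
/-- `φ_μ(r)`: `sinh(√μ r)/√μ` if `μ > 0`, `r` if `μ = 0`, `sin(√(-μ) r)/√(-μ)` if `μ < 0`. -/
noncomputable def phiMu (μ r : ℝ) : ℝ :=
  if 0 < μ then Real.sinh (Real.sqrt μ * r) / Real.sqrt μ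
  else if μ = 0 then r
  else Real.sin (Real.sqrt (-μ) * r) / Real.sqrt (-μ)

/-- `ψ_μ(r)`: `(sinh(√μ r) - √μ r)/μ^{3/2}` if `μ > 0`, `r³/6` if `μ = 0`,
`(√(-μ) r - sin(√(-μ) r))/(-μ)^{3/2}` if `μ < 0`. -/
noncomputable def psiMu (μ r : ℝ) : ℝ :=
  if 0 < μ then (Real.sinh (Real.sqrt μ * r) - Real.sqrt μ * r) / Real.sqrt μ ^ 3
  else if μ = 0 then r ^ 3 / 6
  else (Real.sqrt (-μ) * r - Real.sin (Real.sqrt (-μ) * r)) / Real.sqrt (-μ) ^ 3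

/-- `Ψ_μ(r)`: `(√μ - tanh(√μ r)/r)/μ^{3/2}` if `μ > 0`, `r²/3` if `μ = 0`,
`(tan(√(-μ) r)/r - √(-μ))/(-μ)^{3/2}` if `μ < 0`. -/
noncomputable def PsiMu (μ r : ℝ) : ℝ :=
  if 0 < μ then (Real.sqrt μ - Real.tanh (Real.sqrt μ * r) / r) / Real.sqrt μ ^ 3
  else if μ = 0 then r ^ 2 / 3
  else (Real.tan (Real.sqrt (-μ) * r) / r - Real.sqrt (-μ)) / Real.sqrt (-μ) ^ 3

/-!
With `u = √K r`, one has `φ_K'/φ_K = √K cosh u / sinh u` and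
`Ψ_K(r)/Ψ_K(r/2) = (u - tanh u)/(u - 2 tanh(u/2))`. The half-angle identity
`sinh u · tanh(u/2) = cosh u - 1` factors the left-hand denominator as
`2 - 2 cosh u + u sinh u = sinh u · (u - 2 tanh(u/2))`, and `cosh u · (u - tanh u) = u cosh u - sinh u`
matches the numerators.
-/

open Real

theorem Real.sinh_mul_tanh_half (u : ℝ) : sinh u * tanh (u / 2) = cosh u - 1 := by
  obtain ⟨v, rfl⟩ : ∃ v, u = 2 * v := ⟨u / 2, by ring⟩
  have hv : cosh v ≠ 0 := (cosh_pos v).ne'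
  rw [mul_div_cancel_left₀ v two_ne_zero, tanh_eq_sinh_div_cosh, sinh_two_mul, cosh_two_mul]
  field_simp
  linear_combination -cosh_sq v

theorem Real.two_sub_two_mul_cosh_add_mul_sinh (u : ℝ) :
    2 - 2 * cosh u + u * sinh u = sinh u * (u - 2 * tanh (u / 2)) := by
  linear_combination 2 * sinh_mul_tanh_half u

theorem Real.cosh_mul_sub_tanh (u : ℝ) : cosh u * (u - tanh u) = u * cosh u - sinh u := by
  have hu : cosh u ≠ 0 := (cosh_pos u).ne'
  rw [tanh_eq_sinh_div_cosh]
  field_simp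

section OfPos

variable {μ : ℝ}

theorem phiMu_of_pos (hμ : 0 < μ) (r : ℝ) : phiMu μ r = sinh (√μ * r) / √μ := if_pos hμ

theorem hasDerivAt_phiMu_of_pos (hμ : 0 < μ) (r : ℝ) : HasDerivAt (phiMu μ) (cosh (√μ * r)) r := by
  have hs : √μ ≠ 0 := (sqrt_pos.2 hμ).ne'
  rw [show phiMu μ = fun x => sinh (√μ * x) / √μ from funext (phiMu_of_pos hμ)]
  simpa [hs] using (((hasDerivAt_id r).const_mul √μ).sinh).div_const √μ

theorem PsiMu_of_pos (hμ : 0 < μ) {r : ℝ} (hr : r ≠ 0) :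
    PsiMu μ r = (√μ * r - tanh (√μ * r)) / (√μ ^ 3 * r) := by
  rw [PsiMu, if_pos hμ]
  field_simp

theorem PsiMu_div_PsiMu_half (hμ : 0 < μ) {r : ℝ} (hr : r ≠ 0) :
    PsiMu μ r / PsiMu μ (r / 2) = (√μ * r - tanh (√μ * r)) / (√μ * r - 2 * tanh (√μ * r / 2)) := by
  have hhalf : PsiMu μ (r / 2) = (√μ * r - 2 * tanh (√μ * r / 2)) / (√μ ^ 3 * r) := by
    rw [PsiMu_of_pos hμ (div_ne_zero hr two_ne_zero), mul_div_assoc']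
    field_simp
  have hs : √μ ^ 3 * r ≠ 0 := mul_ne_zero (pow_ne_zero 3 (sqrt_pos.2 hμ).ne') hr
  rw [PsiMu_of_pos hμ hr, hhalf, div_div_div_cancel_right₀ hs]

end OfPos

/-- Identity `F_Sas(r,-K) = (φ_K'(r)/φ_K(r))·(Ψ_K(r)/Ψ_K(r/2))`, negatively curved case. -/
theorem stmt_17 (K r : ℝ) (hK : 0 < K) (hr : 0 < r) :
    Real.sqrt K *
        (Real.sqrt K * r * Real.cosh (Real.sqrt K * r) - Real.sinh (Real.sqrt K * r)) /
        (2 - 2 * Real.cosh (Real.sqrt K * r) + Real.sqrt K * r * Real.sinh (Real.sqrt K * r))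
      = (deriv (phiMu K) r / phiMu K r) * (PsiMu K r / PsiMu K (r / 2)) := by
  rw [(hasDerivAt_phiMu_of_pos hK r).deriv, phiMu_of_pos hK, PsiMu_div_PsiMu_half hK hr.ne',
    two_sub_two_mul_cosh_add_mul_sinh, ← cosh_mul_sub_tanh, div_div_eq_mul_div, div_mul_div_comm]
  ring
end

section
/- Let μ ∈ ℝ, ε ≥ 0, λ > 0 and r > 0; if μ < 0 assume cos(√(−μ)·r) ≠ 0 and cos(√(−μ)·r/2) ≠ 0; assume φ_μ(r) ≠ 0 and λ·(ψ_μ'(r)² − ψ_μ(r)·φ_μ(r)) + ε·r·φ_μ(r) ≠ 0. Then ( λ·(ψ_μ'(r)·φ_μ(r) − ψ_μ(r)·φ_μ'(r)) + ε·r·φ_μ'(r) ) / ( λ·(ψ_μ'(r)² − ψ_μ(r)·φ_μ(r)) + ε·r·φ_μ(r) ) = (φ_μ'(r)/φ_μ(r)) · ( (λ·Ψ_μ(r) + ε) / (λ·Ψ_μ(r/2) + ε) ). -/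
open Real

noncomputable def phiMuDeriv (μ r : ℝ) : ℝ :=
  if 0 < μ then cosh (√μ * r)
  else if μ = 0 then 1
  else cos (√(-μ) * r)

lemma eq_neg_sq_or_eq_zero_or_eq_sq (μ : ℝ) :
    (∃ s, 0 < s ∧ μ = -s ^ 2) ∨ μ = 0 ∨ ∃ s, 0 < s ∧ μ = s ^ 2 := by
  rcases lt_trichotomy μ 0 with hμ | hμ | hμ
  · exact .inl ⟨√(-μ), sqrt_pos.2 (neg_pos.2 hμ), by rw [sq_sqrt (neg_pos.2 hμ).le, neg_neg]⟩
  · exact .inr (.inl hμ)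
  · exact .inr (.inr ⟨√μ, sqrt_pos.2 hμ, (sq_sqrt hμ.le).symm⟩)

section Cases

variable {s : ℝ}

lemma phiMu_sq (hs : 0 < s) : phiMu (s ^ 2) = fun r => sinh (s * r) / s := by
  funext r; simp [phiMu, hs.ne', sqrt_sq hs.le]

lemma phiMu_neg_sq (hs : 0 < s) : phiMu (-s ^ 2) = fun r => sin (s * r) / s := by
  funext r; simp [phiMu, hs.ne', sqrt_sq hs.le, (sq_nonneg s).not_gt]

lemma phiMuDeriv_sq (hs : 0 < s) (r : ℝ) : phiMuDeriv (s ^ 2) r = cosh (s * r) := by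
  simp [phiMuDeriv, hs.ne', sqrt_sq hs.le]

lemma phiMuDeriv_neg_sq (hs : 0 < s) (r : ℝ) : phiMuDeriv (-s ^ 2) r = cos (s * r) := by
  simp [phiMuDeriv, hs.ne', sqrt_sq hs.le, (sq_nonneg s).not_gt]

lemma psiMu_sq (hs : 0 < s) (r : ℝ) : psiMu (s ^ 2) r = (sinh (s * r) - s * r) / s ^ 3 := by
  simp [psiMu, hs.ne', sqrt_sq hs.le]

lemma psiMu_neg_sq (hs : 0 < s) (r : ℝ) : psiMu (-s ^ 2) r = (s * r - sin (s * r)) / s ^ 3 := by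
  simp [psiMu, hs.ne', sqrt_sq hs.le, (sq_nonneg s).not_gt]

lemma PsiMu_sq (hs : 0 < s) (r : ℝ) : PsiMu (s ^ 2) r = (s - tanh (s * r) / r) / s ^ 3 := by
  simp [PsiMu, hs.ne', sqrt_sq hs.le]

lemma PsiMu_neg_sq (hs : 0 < s) (r : ℝ) : PsiMu (-s ^ 2) r = (tan (s * r) / r - s) / s ^ 3 := by
  simp [PsiMu, hs.ne', sqrt_sq hs.le, (sq_nonneg s).not_gt]

end Cases

lemma phiMu_zero : phiMu 0 = id := by
  funext r; simp [phiMu]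

lemma phiMuDeriv_zero (r : ℝ) : phiMuDeriv 0 r = 1 := by
  simp [phiMuDeriv]

lemma psiMu_zero : psiMu 0 = fun r => r ^ 3 / 6 := by
  funext r; simp [psiMu]

lemma PsiMu_zero (r : ℝ) : PsiMu 0 r = r ^ 2 / 3 := by
  simp [PsiMu]

lemma hasDerivAt_phiMu (μ r : ℝ) : HasDerivAt (phiMu μ) (phiMuDeriv μ r) r := by
  have hlin (s : ℝ) : HasDerivAt (fun x => s * x) s r := by
    simpa using (hasDerivAt_id r).const_mul s
  rcases eq_neg_sq_or_eq_zero_or_eq_sq μ with ⟨s, hs, rfl⟩ | rfl | ⟨s, hs, rfl⟩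
  · rw [phiMu_neg_sq hs, phiMuDeriv_neg_sq hs]
    simpa [hs.ne'] using ((hlin s).sin).div_const s
  · rw [phiMu_zero, phiMuDeriv_zero]
    exact hasDerivAt_id r
  · rw [phiMu_sq hs, phiMuDeriv_sq hs]
    simpa [hs.ne'] using ((hlin s).sinh).div_const s

lemma deriv_phiMu (μ : ℝ) : deriv (phiMu μ) = phiMuDeriv μ :=
  funext fun r => (hasDerivAt_phiMu μ r).deriv

lemma phiMuDeriv_ne_zero {μ r : ℝ} (h : μ < 0 → cos (√(-μ) * r) ≠ 0) : phiMuDeriv μ r ≠ 0 := by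
  rcases eq_neg_sq_or_eq_zero_or_eq_sq μ with ⟨s, hs, rfl⟩ | rfl | ⟨s, hs, rfl⟩
  · rw [phiMuDeriv_neg_sq hs]
    simpa [sqrt_sq hs.le, hs] using h
  · rw [phiMuDeriv_zero]; exact one_ne_zero
  · rw [phiMuDeriv_sq hs]; exact (cosh_pos _).ne'

lemma phiMuDeriv_sq_sub_mul_phiMu_sq (μ r : ℝ) : phiMuDeriv μ r ^ 2 - μ * phiMu μ r ^ 2 = 1 := by
  rcases eq_neg_sq_or_eq_zero_or_eq_sq μ with ⟨s, hs, rfl⟩ | rfl | ⟨s, hs, rfl⟩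
  · rw [phiMu_neg_sq hs, phiMuDeriv_neg_sq hs]
    field_simp
    linear_combination sin_sq_add_cos_sq (s * r)
  · simp [phiMuDeriv_zero]
  · rw [phiMu_sq hs, phiMuDeriv_sq hs]
    field_simp
    linear_combination cosh_sq_sub_sinh_sq (s * r)

lemma phiMu_two_mul (μ r : ℝ) : phiMu μ (2 * r) = 2 * phiMu μ r * phiMuDeriv μ r := by
  rcases eq_neg_sq_or_eq_zero_or_eq_sq μ with ⟨s, hs, rfl⟩ | rfl | ⟨s, hs, rfl⟩
  · simp only [phiMu_neg_sq hs, phiMuDeriv_neg_sq hs, mul_left_comm s 2, sin_two_mul]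
    ring
  · simp [phiMu_zero, phiMuDeriv_zero]
  · simp only [phiMu_sq hs, phiMuDeriv_sq hs, mul_left_comm s 2, sinh_two_mul]
    ring

lemma phiMuDeriv_two_mul (μ r : ℝ) : phiMuDeriv μ (2 * r) = 2 * phiMuDeriv μ r ^ 2 - 1 := by
  rcases eq_neg_sq_or_eq_zero_or_eq_sq μ with ⟨s, hs, rfl⟩ | rfl | ⟨s, hs, rfl⟩
  · rw [phiMuDeriv_neg_sq hs, phiMuDeriv_neg_sq hs, mul_left_comm, cos_two_mul]
  · norm_num [phiMuDeriv_zero]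
  · rw [phiMuDeriv_sq hs, phiMuDeriv_sq hs, mul_left_comm, cosh_two_mul, cosh_sq]
    ring

lemma mul_psiMu (μ r : ℝ) : μ * psiMu μ r = phiMu μ r - r := by
  rcases eq_neg_sq_or_eq_zero_or_eq_sq μ with ⟨s, hs, rfl⟩ | rfl | ⟨s, hs, rfl⟩
  · rw [psiMu_neg_sq hs, phiMu_neg_sq hs]
    field_simp
    ring
  · simp [phiMu_zero]
  · rw [psiMu_sq hs, phiMu_sq hs]
    field_simp

lemma mul_deriv_psiMu (μ r : ℝ) : μ * deriv (psiMu μ) r = phiMuDeriv μ r - 1 := by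
  rcases eq_or_ne μ 0 with rfl | hμ
  · simp [phiMuDeriv_zero]
  · have hpsi : psiMu μ = fun x => (phiMu μ x - x) / μ := by
      funext x; rw [← mul_psiMu, mul_div_cancel_left₀ _ hμ]
    have hderiv : HasDerivAt (fun x => (phiMu μ x - x) / μ) ((phiMuDeriv μ r - 1) / μ) r :=
      ((hasDerivAt_phiMu μ r).sub (hasDerivAt_id r)).div_const μ
    rw [hpsi, hderiv.deriv, mul_div_cancel₀ _ hμ]

lemma mul_PsiMu {μ r : ℝ} (hr : r ≠ 0) (h : phiMuDeriv μ r ≠ 0) :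
    μ * (r * phiMuDeriv μ r * PsiMu μ r) = r * phiMuDeriv μ r - phiMu μ r := by
  rcases eq_neg_sq_or_eq_zero_or_eq_sq μ with ⟨s, hs, rfl⟩ | rfl | ⟨s, hs, rfl⟩
  · rw [phiMuDeriv_neg_sq hs] at h ⊢
    rw [PsiMu_neg_sq hs, phiMu_neg_sq hs, tan_eq_sin_div_cos]
    field_simp
    ring
  · simp [phiMu_zero, phiMuDeriv_zero]
  · have h := (cosh_pos (s * r)).ne'
    rw [PsiMu_sq hs, phiMu_sq hs, phiMuDeriv_sq hs, tanh_eq_sinh_div_cosh]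
    field_simp

lemma deriv_psiMu_zero (r : ℝ) : deriv (psiMu 0) r = r ^ 2 / 2 := by
  rw [psiMu_zero, ((hasDerivAt_pow 3 r).div_const 6).deriv]
  ring

lemma deriv_psiMu_mul_phiMu_sub {μ r : ℝ} (hr : r ≠ 0) (h : phiMuDeriv μ r ≠ 0) :
    deriv (psiMu μ) r * phiMu μ r - psiMu μ r * phiMuDeriv μ r
      = r * phiMuDeriv μ r * PsiMu μ r := by
  rcases eq_or_ne μ 0 with rfl | hμ
  · rw [deriv_psiMu_zero]
    simp only [psiMu_zero, phiMu_zero, phiMuDeriv_zero, PsiMu_zero, id]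
    ring
  · refine mul_left_cancel₀ hμ ?_
    linear_combination phiMu μ r * mul_deriv_psiMu μ r - phiMuDeriv μ r * mul_psiMu μ r
      - mul_PsiMu hr h

lemma deriv_psiMu_sq_sub {μ r : ℝ} (hr : r ≠ 0) (h : phiMuDeriv μ (r / 2) ≠ 0) :
    deriv (psiMu μ) r ^ 2 - psiMu μ r * phiMu μ r = r * phiMu μ r * PsiMu μ (r / 2) := by
  rcases eq_or_ne μ 0 with rfl | hμ
  · rw [deriv_psiMu_zero]
    simp only [psiMu_zero, phiMu_zero, PsiMu_zero, id]
    ring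
  obtain ⟨t, rfl⟩ : ∃ t, r = 2 * t := ⟨r / 2, by ring⟩
  rw [mul_div_cancel_left₀ t two_ne_zero] at h ⊢
  have ht : t ≠ 0 := right_ne_zero_of_mul hr
  set c := phiMuDeriv μ t
  set σ := phiMu μ t
  have hpyth : c ^ 2 - μ * σ ^ 2 = 1 := phiMuDeriv_sq_sub_mul_phiMu_sq μ t
  have hψ' : deriv (psiMu μ) (2 * t) = 2 * σ ^ 2 := by
    refine mul_left_cancel₀ hμ ?_
    linear_combination mul_deriv_psiMu μ (2 * t) + phiMuDeriv_two_mul μ t + 2 * hpyth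
  refine mul_left_cancel₀ hμ ?_
  rw [hψ', phiMu_two_mul]
  linear_combination (-2 * σ * c) * (mul_psiMu μ (2 * t) + phiMu_two_mul μ t)
    - 4 * σ * mul_PsiMu ht h - 4 * σ ^ 2 * hpyth

theorem stmt_19_general (μ ε lam r : ℝ) (hr : 0 < r)
    (h1 : μ < 0 → Real.cos (Real.sqrt (-μ) * r) ≠ 0)
    (h2 : μ < 0 → Real.cos (Real.sqrt (-μ) * (r / 2)) ≠ 0) :
    (lam * (deriv (psiMu μ) r * phiMu μ r - psiMu μ r * deriv (phiMu μ) r)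
        + ε * r * deriv (phiMu μ) r) /
      (lam * ((deriv (psiMu μ) r) ^ 2 - psiMu μ r * phiMu μ r) + ε * r * phiMu μ r)
      = (deriv (phiMu μ) r / phiMu μ r) *
          ((lam * PsiMu μ r + ε) / (lam * PsiMu μ (r / 2) + ε)) := by
  rw [deriv_phiMu, deriv_psiMu_mul_phiMu_sub hr.ne' (phiMuDeriv_ne_zero h1),
    deriv_psiMu_sq_sub hr.ne' (phiMuDeriv_ne_zero h2)]
  calc _ = r * (phiMuDeriv μ r * (lam * PsiMu μ r + ε))
        / (r * (phiMu μ r * (lam * PsiMu μ (r / 2) + ε))) := by ring_nf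
    _ = _ := by rw [mul_div_mul_left _ _ hr.ne', mul_div_mul_comm]

/-- The computation of `λ G''_ε(r)` in the proof of the horizontal Hessian comparison
theorem on Sasakian foliations:
`(λ(ψ_μ'(r)φ_μ(r) - ψ_μ(r)φ_μ'(r)) + ε r φ_μ'(r)) / (λ(ψ_μ'(r)² - ψ_μ(r)φ_μ(r)) + ε r φ_μ(r))
  = (φ_μ'(r)/φ_μ(r)) · (λ Ψ_μ(r) + ε)/(λ Ψ_μ(r/2) + ε)`. -/
theorem stmt_19 (μ ε lam r : ℝ) (hε : 0 ≤ ε) (hlam : 0 < lam) (hr : 0 < r)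
    (h1 : μ < 0 → Real.cos (Real.sqrt (-μ) * r) ≠ 0)
    (h2 : μ < 0 → Real.cos (Real.sqrt (-μ) * (r / 2)) ≠ 0)
    (hφ : phiMu μ r ≠ 0)
    (hden : lam * ((deriv (psiMu μ) r) ^ 2 - psiMu μ r * phiMu μ r) + ε * r * phiMu μ r ≠ 0) :
    (lam * (deriv (psiMu μ) r * phiMu μ r - psiMu μ r * deriv (phiMu μ) r)
        + ε * r * deriv (phiMu μ) r) /
      (lam * ((deriv (psiMu μ) r) ^ 2 - psiMu μ r * phiMu μ r) + ε * r * phiMu μ r)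
      = (deriv (phiMu μ) r / phiMu μ r) *
          ((lam * PsiMu μ r + ε) / (lam * PsiMu μ (r / 2) + ε)) :=
  stmt_19_general μ ε lam r hr h1 h2
end
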